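/- arXiv:1601.03271 — 2 statements merged into one kernel-verified Lean document; each statement's English description precedes it below -/
import Mathlib

section
/- Two infinite types are in the coinductive subtyping relation if and only if all their finite truncations are: (∀k ∈ ℕ, cut(A,k) ≤_T cut(B,k)) ↔ A ≤_T B. -/
namespace CAP

/-- μ-types: variables, constants, compounds D @ A, functions A ⊃ B, unions A ⊕ B, recursive μV.A -/
inductive MuTy : Type
  | tvar : ℕ → MuTy
  | tconst : ℕ → MuTy
  | comp : MuTy → MuTy → MuTy
  | arr : MuTy → MuTy → MuTy
  | union : MuTy → MuTy → MuTy
  | mu : ℕ → MuTy → MuTy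
  deriving DecidableEq

namespace MuTy

/-- substitution of `B` for variable `V` -/
def subst (V : ℕ) (B : MuTy) : MuTy → MuTy
  | tvar n => if n = V then B else tvar n
  | tconst c => tconst c
  | comp A₁ A₂ => comp (subst V B A₁) (subst V B A₂)
  | arr A₁ A₂ => arr (subst V B A₁) (subst V B A₂)
  | union A₁ A₂ => union (subst V B A₁) (subst V B A₂)
  | mu W A => if W = V then mu W A else mu W (subst V B A)

/-- `V` occurs in the type only under `comp` or `arr` (if at all) -/
def Guarded (V : ℕ) : MuTy → Prop
  | tvar n => n ≠ V
  | tconst _ => True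
  | comp _ _ => True
  | arr _ _ => True
  | union A₁ A₂ => Guarded V A₁ ∧ Guarded V A₂
  | mu W A => W = V ∨ Guarded V A

/-- contractive μ-types -/
def Contractive : MuTy → Prop
  | tvar _ => True
  | tconst _ => True
  | comp A₁ A₂ => Contractive A₁ ∧ Contractive A₂
  | arr A₁ A₂ => Contractive A₁ ∧ Contractive A₂
  | union A₁ A₂ => Contractive A₁ ∧ Contractive A₂
  | mu V A => Guarded V A ∧ Contractive A

/-- free variables -/
def fv : MuTy → Set ℕ
  | tvar n => {n}
  | tconst _ => ∅
  | comp A₁ A₂ => fv A₁ ∪ fv A₂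
  | arr A₁ A₂ => fv A₁ ∪ fv A₂
  | union A₁ A₂ => fv A₁ ∪ fv A₂
  | mu V A => fv A \ {V}

/-- number of consecutive μ binders at the root -/
def headMu : MuTy → ℕ
  | mu _ A => headMu A + 1
  | _ => 0

end MuTy

/-- inductive μ-type equivalence ≈ -/
inductive MuEq : MuTy → MuTy → Prop
  | refl (A) : MuEq A A
  | trans : MuEq A B → MuEq B C → MuEq A C
  | symm : MuEq A B → MuEq B A
  | arrCong : MuEq A A' → MuEq B B' → MuEq (.arr A B) (.arr A' B')
  | compCong : MuEq D D' → MuEq A A' → MuEq (.comp D A) (.comp D' A')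
  | unionIdem (A) : MuEq (.union A A) A
  | unionComm (A B) : MuEq (.union A B) (.union B A)
  | unionAssoc (A B C) : MuEq (.union A (.union B C)) (.union (.union A B) C)
  | unionCong : MuEq A A' → MuEq B B' → MuEq (.union A B) (.union A' B')
  | muCong : MuEq A B → MuEq (.mu V A) (.mu V B)
  | fold (V A) : MuEq (.mu V A) (MuTy.subst V (.mu V A) A)
  | contr : MuEq A (MuTy.subst V A B) → (MuTy.mu V B).Contractive → MuEq A (.mu V B)

/-- inductive μ-type subtyping, with a context of variable assumptions -/
inductive MuLe : Set (ℕ × ℕ) → MuTy → MuTy → Prop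
  | refl (S A) : MuLe S A A
  | hyp : (V, W) ∈ S → MuLe S (.tvar V) (.tvar W)
  | eq : MuEq A B → MuLe S A B
  | trans : MuLe S A B → MuLe S B C → MuLe S A C
  | compCong : MuLe S D D' → MuLe S A A' → MuLe S (.comp D A) (.comp D' A')
  | func : MuLe S A' A → MuLe S B B' → MuLe S (.arr A B) (.arr A' B')
  | unionL : MuLe S A C → MuLe S B C → MuLe S (.union A B) C
  | unionR1 : MuLe S A B → MuLe S A (.union B C)
  | unionR2 : MuLe S A C → MuLe S A (.union B C)
  | recRule : MuLe (insert (V, W) S) A B → W ∉ A.fv → V ∉ B.fv →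
      MuLe S (.mu V A) (.mu W B)

/-- binary association trees of unions, used to express n-fold unions with arbitrary association -/
inductive UTree : Type
  | leaf : MuTy → UTree
  | node : UTree → UTree → UTree

def UTree.toTy : UTree → MuTy
  | .leaf A => A
  | .node l r => .union l.toTy r.toTy

def UTree.leaves : UTree → List MuTy
  | .leaf A => [A]
  | .node l r => l.leaves ++ r.leaves

/-! ## Infinite types as trees -/

inductive Atom : Type
  | var : ℕ → Atom
  | const : ℕ → Atom
  | bullet : Atom
  deriving DecidableEq

inductive Lab : Type
  | atom : Atom → Lab
  | comp : Lab
  | arr : Lab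
  | union : Lab
  deriving DecidableEq

def Lab.IsBinary : Lab → Prop
  | .comp => True
  | .arr => True
  | .union => True
  | .atom _ => False

/-- possibly infinite trees: partial labelling of positions -/
abbrev ITree : Type := List Bool → Option Lab

namespace ITree

def child (A : ITree) (b : Bool) : ITree := fun π => A (b :: π)

/-- well-formed infinite types: rooted, prefix-closed with binary branching,
and no infinite branch consisting solely of ⊕ -/
def Wf (A : ITree) : Prop :=
  (A []).isSome ∧
  (∀ π b, (A (π ++ [b])).isSome ↔ ∃ l, A π = some l ∧ l.IsBinary) ∧
  (∀ (π : List Bool) (f : ℕ → Bool), ∃ n, A (π ++ (List.range n).map f) ≠ some Lab.union)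

end ITree

/-- maximal union decomposition: the list of non-union components of a tree -/
inductive UnionComps : ITree → List ITree → Prop
  | nonUnion (A : ITree) : A [] ≠ some Lab.union → UnionComps A [A]
  | union (A : ITree) (l r : List ITree) :
      A [] = some Lab.union →
      UnionComps (A.child false) l → UnionComps (A.child true) r →
      UnionComps A (l ++ r)

/-- the rule functional for coinductive tree equivalence -/
def EqF (R : ITree → ITree → Prop) (A B : ITree) : Prop :=
  (∃ a : Atom, A [] = some (Lab.atom a) ∧ B [] = some (Lab.atom a)) ∨
  (A [] = some Lab.comp ∧ B [] = some Lab.comp ∧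
    R (A.child false) (B.child false) ∧ R (A.child true) (B.child true)) ∨
  (A [] = some Lab.arr ∧ B [] = some Lab.arr ∧
    R (A.child false) (B.child false) ∧ R (A.child true) (B.child true)) ∨
  (∃ (la lb : List ITree), UnionComps A la ∧ UnionComps B lb ∧
    2 < la.length + lb.length ∧
    (∃ f : Fin la.length → Fin lb.length, ∀ i, R (la.get i) (lb.get (f i))) ∧
    (∃ g : Fin lb.length → Fin la.length, ∀ j, R (la.get (g j)) (lb.get j)))

/-- coinductive tree equivalence ≈_T : the greatest fixed point of `EqF` -/
def TreeEq (A B : ITree) : Prop :=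
  ∃ R : ITree → ITree → Prop, (∀ X Y, R X Y → EqF R X Y) ∧ R A B

/-- the rule functional for coinductive tree subtyping -/
def LeF (R : ITree → ITree → Prop) (A B : ITree) : Prop :=
  (∃ a : Atom, A [] = some (Lab.atom a) ∧ B [] = some (Lab.atom a)) ∨
  (A [] = some Lab.comp ∧ B [] = some Lab.comp ∧
    R (A.child false) (B.child false) ∧ R (A.child true) (B.child true)) ∨
  (A [] = some Lab.arr ∧ B [] = some Lab.arr ∧
    R (B.child false) (A.child false) ∧ R (A.child true) (B.child true)) ∨
  (∃ (la lb : List ITree), UnionComps A la ∧ UnionComps B lb ∧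
    2 < la.length + lb.length ∧
    (∃ f : Fin la.length → Fin lb.length, ∀ i, R (la.get i) (lb.get (f i))))

/-- coinductive tree subtyping ≤_T : the greatest fixed point of `LeF` -/
def TreeLe (A B : ITree) : Prop :=
  ∃ R : ITree → ITree → Prop, (∀ X Y, R X Y → LeF R X Y) ∧ R A B

open Classical in
/-- tree substitution of tree `B` for the variable `V` -/
noncomputable def substT (V : ℕ) (B A : ITree) : ITree := fun π =>
  if h : ∃ ps : List Bool × List Bool,
      π = ps.1 ++ ps.2 ∧ A ps.1 = some (Lab.atom (Atom.var V))
  then B (Classical.choose h).2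
  else A π

/-- the single-node tree consisting of an atom -/
def atomTree (a : Atom) : ITree := fun π => if π = [] then some (Lab.atom a) else none

/-- a tree with binary root label `l` and subtrees `A₁`, `A₂` -/
def binTree (l : Lab) (A₁ A₂ : ITree) : ITree := fun π =>
  match π with
  | [] => some l
  | false :: π' => A₁ π'
  | true :: π' => A₂ π'

/-- effective depth of a position: union nodes do not consume depth -/
def edepth (A : ITree) : List Bool → ℕ
  | [] => 0
  | b :: π => (if A [] = some Lab.union then 0 else 1) + edepth (A.child b) π

open Classical in
/-- truncation of a tree at depth `k`; cut points are replaced by the constant • -/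
noncomputable def cut (k : ℕ) (A : ITree) : ITree := fun π =>
  if ∀ p, p <+: π → p ≠ π → edepth A p < k then
    (if edepth A π < k then A π
     else if (A π).isSome then some (Lab.atom Atom.bullet) else none)
  else none

/-- labels of the tree interpretation of a μ-type (μ is unfolded completely) -/
inductive HasLab : MuTy → List Bool → Lab → Prop
  | tvar (n) : HasLab (.tvar n) [] (.atom (.var n))
  | tconst (c) : HasLab (.tconst c) [] (.atom (.const c))
  | compRoot (A B) : HasLab (.comp A B) [] .comp
  | compL : HasLab A π l → HasLab (.comp A B) (false :: π) l
  | compR : HasLab B π l → HasLab (.comp A B) (true :: π) l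
  | arrRoot (A B) : HasLab (.arr A B) [] .arr
  | arrL : HasLab A π l → HasLab (.arr A B) (false :: π) l
  | arrR : HasLab B π l → HasLab (.arr A B) (true :: π) l
  | unionRoot (A B) : HasLab (.union A B) [] .union
  | unionL : HasLab A π l → HasLab (.union A B) (false :: π) l
  | unionR : HasLab B π l → HasLab (.union A B) (true :: π) l
  | mu : HasLab (MuTy.subst V (.mu V A) A) π l → HasLab (.mu V A) π l

open Classical in
/-- the tree interpretation ⟦·⟧ of μ-types -/
noncomputable def interp (A : MuTy) : ITree := fun π =>
  if h : ∃ l, HasLab A π l then some (Classical.choose h) else none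

/-- application of a parallel substitution to a μ-type -/
def applyS (σ : ℕ → MuTy) : MuTy → MuTy
  | .tvar n => σ n
  | .tconst c => .tconst c
  | .comp A B => .comp (applyS σ A) (applyS σ B)
  | .arr A B => .arr (applyS σ A) (applyS σ B)
  | .union A B => .union (applyS σ A) (applyS σ B)
  | .mu V A => .mu V (applyS (Function.update σ V (.tvar V)) A)

/-- outermost type constructor (head μ binders are unfolded/skipped) -/
inductive HeadC : Type
  | hvar : ℕ → HeadC
  | hconst : ℕ → HeadC
  | hcomp : HeadC
  | harr : HeadC
  | hunion : HeadC
  deriving DecidableEq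

def headOf : MuTy → HeadC
  | .tvar n => .hvar n
  | .tconst c => .hconst c
  | .comp _ _ => .hcomp
  | .arr _ _ => .harr
  | .union _ _ => .hunion
  | .mu _ A => headOf A

/-- non-union μ-types: after unfolding head μ binders the top constructor is not ⊕ -/
def NonUnion : MuTy → Prop
  | .union _ _ => False
  | .mu _ A => NonUnion A
  | _ => True

/-- union contexts U ::= □ | U ⊕ A | A ⊕ U -/
inductive UCtx : Type
  | hole : UCtx
  | left : UCtx → MuTy → UCtx
  | right : MuTy → UCtx → UCtx

def UCtx.fill : UCtx → MuTy → MuTy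
  | .hole, A => A
  | .left U B, A => .union (U.fill A) B
  | .right B U, A => .union B (U.fill A)

end CAP

namespace CAP

/-!
Truncation commutes with the rules of `≤_T`: `cut (k+1) A` has the root label of `A`, its union
components are the truncated union components of `A`, and the children of an `@` or `⊃` root are
truncated at depth `k`. So the pairs `(cut k A, cut k B)` with `A ≤_T B` form a post-fixed point,
and so do those with `cut k' A ≤_T cut k' B` for some `k' ≥ k`.

Conversely, "all truncations are related" is itself a post-fixed point. At a union node the
witnessing function may depend on the depth, but there are only finitely many functions between
the two lists of components, so one of them works at infinitely many depths, hence at all.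
-/

namespace ITree

theorem Wf.child {A : ITree} (hA : A.Wf) {l : Lab} (hl : A [] = some l) (hb : l.IsBinary)
    (b : Bool) : (A.child b).Wf := by
  obtain ⟨-, hbranch, hunion⟩ := hA
  refine ⟨?_, fun π b' => hbranch (b :: π) b', fun π f => hunion (b :: π) f⟩
  simpa [ITree.child] using (hbranch [] b).2 ⟨l, hl, hb⟩

theorem exists_branch {p : ITree → Prop} (hstep : ∀ X, p X → ∃ b, p (X.child b))
    {A : ITree} (hA : p A) : ∃ f : ℕ → Bool, ∀ n, p (fun π => A ((List.range n).map f ++ π)) := by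
  choose pick hpick using hstep
  let shift (π : List Bool) : ITree := fun σ => A (π ++ σ)
  have hshift : ∀ π b, (shift π).child b = shift (π ++ [b]) := by
    intro π b; funext σ; simp [shift, ITree.child]
  let g : ℕ → {π // p (shift π)} := fun n =>
    Nat.rec ⟨[], hA⟩ (fun _ π => ⟨π.1 ++ [pick _ π.2], hshift π.1 _ ▸ hpick _ π.2⟩) n
  refine ⟨fun n => pick _ (g n).2, fun n => ?_⟩
  have hg : ∀ n, (g n).1 = (List.range n).map (fun n => pick _ (g n).2) := by
    intro n
    induction n with
    | zero => rfl
    | succ n ih => simp [g, List.range_succ, ← ih]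
  exact hg n ▸ (g n).2

end ITree

theorem cut_root {k : ℕ} (hk : 0 < k) (A : ITree) : cut k A [] = A [] := by
  simp [cut, edepth, hk]

theorem cut_zero_root {A : ITree} (h : (A []).isSome) :
    cut 0 A [] = some (Lab.atom Atom.bullet) := by
  simp [cut, edepth, h]

theorem child_cut {A : ITree} {k k' : ℕ} (hk : 0 < k)
    (hkk' : k = (if A [] = some Lab.union then 0 else 1) + k') (b : Bool) :
    (cut k A).child b = cut k' (A.child b) := by
  classical
  funext π
  change cut k A (b :: π) = cut k' (A.child b) π
  generalize hd : (if A [] = some Lab.union then 0 else 1) = d at hkk'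
  have hcons : ∀ p, edepth A (b :: p) = d + edepth (A.child b) p := fun p => by
    rw [← hd]; rfl
  have hguard : (∀ p, p <+: b :: π → p ≠ b :: π → edepth A p < k) ↔
      (∀ q, q <+: π → q ≠ π → edepth (A.child b) q < k') := by
    constructor
    · intro H q hq hne
      have := H (b :: q) (List.cons_prefix_cons.mpr ⟨rfl, hq⟩) (by simpa using hne)
      rw [hcons] at this
      omega
    · intro H p hp hne
      rcases List.prefix_cons_iff.mp hp with rfl | ⟨q, rfl, hq⟩
      · simpa [edepth] using hk
      · have := H q hq (by simpa using hne)
        rw [hcons]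
        omega
  have hlt : edepth A (b :: π) < k ↔ edepth (A.child b) π < k' := by rw [hcons]; omega
  exact if_congr hguard (if_congr hlt rfl rfl) rfl

theorem child_cut_of_union {A : ITree} (h : A [] = some Lab.union) {k : ℕ} (hk : 0 < k)
    (b : Bool) : (cut k A).child b = cut k (A.child b) :=
  child_cut hk (by simp [h]) b

theorem child_cut_succ {A : ITree} (h : A [] ≠ some Lab.union) (k : ℕ) (b : Bool) :
    (cut (k + 1) A).child b = cut k (A.child b) :=
  child_cut k.succ_pos (by simp [h, add_comm]) b

namespace UnionComps

variable {A : ITree} {l : List ITree}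

theorem eq_singleton (hne : A [] ≠ some Lab.union) (h : UnionComps A l) : l = [A] := by
  cases h with
  | nonUnion => rfl
  | union _ _ _ hu => exact absurd hu hne

theorem length_eq_one (hne : A [] ≠ some Lab.union) (h : UnionComps A l) : l.length = 1 := by
  rw [h.eq_singleton hne, List.length_singleton]

theorem unique {l' : List ITree} (h : UnionComps A l) (h' : UnionComps A l') : l = l' := by
  induction h generalizing l' with
  | nonUnion A hne => exact (h'.eq_singleton hne).symm
  | union A l r hu _ _ ihl ihr =>
    cases h' with
    | nonUnion _ hne => exact absurd hu hne
    | union _ l' r' _ hl' hr' => rw [ihl hl', ihr hr']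

theorem wf (hA : A.Wf) (h : UnionComps A l) : ∀ X ∈ l, X.Wf := by
  induction h with
  | nonUnion A _ => simpa using hA
  | union A l r hu _ _ ihl ihr =>
    simp only [List.mem_append]
    rintro X (hX | hX)
    · exact ihl (hA.child hu trivial false) X hX
    · exact ihr (hA.child hu trivial true) X hX

theorem cut {k : ℕ} (hk : 0 < k) (h : UnionComps A l) :
    UnionComps (cut k A) (l.map (cut k)) := by
  induction h with
  | nonUnion A hne => exact .nonUnion _ (by rwa [cut_root hk])
  | union A l r hu _ _ ihl ihr =>
    rw [List.map_append]
    refine .union _ _ _ (by rwa [cut_root hk]) ?_ ?_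
    · rwa [child_cut_of_union hu hk]
    · rwa [child_cut_of_union hu hk]

/-- Otherwise the union spine would contain an infinite branch of `⊕` nodes. -/
theorem exists_of_wf (hA : A.Wf) : ∃ l, UnionComps A l := by
  have hroot : ∀ X : ITree, (¬ ∃ l, UnionComps X l) → X [] = some Lab.union := fun X hX => by
    by_contra hne
    exact hX ⟨_, .nonUnion X hne⟩
  have hstep : ∀ X : ITree, (¬ ∃ l, UnionComps X l) → ∃ b, ¬ ∃ l, UnionComps (X.child b) l := by
    intro X hX
    by_contra! hchild
    obtain ⟨l, hl⟩ := hchild false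
    obtain ⟨r, hr⟩ := hchild true
    exact hX ⟨_, .union X l r (hroot X hX) hl hr⟩
  by_contra hnone
  obtain ⟨f, hf⟩ := ITree.exists_branch hstep hnone
  obtain ⟨n, hn⟩ := hA.2.2 [] f
  exact hn (by simpa using hroot _ (hf n))

end UnionComps

theorem exists_fin_get_map_iff {α β : Type*} (g : α → β) (R : β → β → Prop) (la lb : List α) :
    (∃ f : Fin (la.map g).length → Fin (lb.map g).length,
        ∀ i, R ((la.map g).get i) ((lb.map g).get (f i))) ↔
      ∃ f : Fin la.length → Fin lb.length, ∀ i, R (g (la.get i)) (g (lb.get (f i))) := by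
  have ha := List.length_map (as := la) g
  have hb := List.length_map (as := lb) g
  constructor
  · rintro ⟨f, hf⟩
    exact ⟨fun i => (f (i.cast ha.symm)).cast hb, fun i => by simpa using hf (i.cast ha.symm)⟩
  · rintro ⟨f, hf⟩
    exact ⟨fun i => (f (i.cast ha)).cast hb.symm, fun i => by simpa using hf (i.cast ha)⟩

def UnionCase (R : ITree → ITree → Prop) (A B : ITree) : Prop :=
  ∃ (la lb : List ITree), UnionComps A la ∧ UnionComps B lb ∧
    2 < la.length + lb.length ∧
    (∃ f : Fin la.length → Fin lb.length, ∀ i, R (la.get i) (lb.get (f i)))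

/-- `LeF` with one relation for the children of `@` and `⊃` nodes and another for the union
components; truncation lowers the depth of the former but not of the latter. -/
def LeStep (R₀ R₁ : ITree → ITree → Prop) (A B : ITree) : Prop :=
  (∃ a : Atom, A [] = some (Lab.atom a) ∧ B [] = some (Lab.atom a)) ∨
  (A [] = some Lab.comp ∧ B [] = some Lab.comp ∧
    R₀ (A.child false) (B.child false) ∧ R₀ (A.child true) (B.child true)) ∨
  (A [] = some Lab.arr ∧ B [] = some Lab.arr ∧
    R₀ (B.child false) (A.child false) ∧ R₀ (A.child true) (B.child true)) ∨
  UnionCase R₁ A B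

theorem unionCase_iff {R : ITree → ITree → Prop} {A B : ITree} {la lb : List ITree}
    (hla : UnionComps A la) (hlb : UnionComps B lb) :
    UnionCase R A B ↔ 2 < la.length + lb.length ∧
      ∃ f : Fin la.length → Fin lb.length, ∀ i, R (la.get i) (lb.get (f i)) := by
  constructor
  · rintro ⟨la', lb', hla', hlb', h⟩
    obtain rfl := hla.unique hla'
    obtain rfl := hlb.unique hlb'
    exact h
  · exact fun h => ⟨la, lb, hla, hlb, h⟩

theorem unionCase_cut_iff {R : ITree → ITree → Prop} {A B : ITree} (hA : A.Wf) (hB : B.Wf)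
    {k : ℕ} (hk : 0 < k) :
    UnionCase R (cut k A) (cut k B) ↔ UnionCase (fun U V => R (cut k U) (cut k V)) A B := by
  obtain ⟨la, hla⟩ := UnionComps.exists_of_wf hA
  obtain ⟨lb, hlb⟩ := UnionComps.exists_of_wf hB
  rw [unionCase_iff hla hlb, unionCase_iff (hla.cut hk) (hlb.cut hk), exists_fin_get_map_iff,
    List.length_map, List.length_map]

theorem leF_iff_leStep {R : ITree → ITree → Prop} {A B : ITree} : LeF R A B ↔ LeStep R R A B :=
  Iff.rfl

namespace LeStep

variable {R₀ R₁ S₀ S₁ : ITree → ITree → Prop} {A B : ITree}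

theorem mono (h₀ : ∀ U V, R₀ U V → S₀ U V) (h₁ : ∀ U V, R₁ U V → S₁ U V) :
    LeStep R₀ R₁ A B → LeStep S₀ S₁ A B := by
  rintro (hatom | ⟨h1, h2, h3, h4⟩ | ⟨h1, h2, h3, h4⟩ | ⟨la, lb, h1, h2, h3, f, hf⟩)
  · exact .inl hatom
  · exact .inr (.inl ⟨h1, h2, h₀ _ _ h3, h₀ _ _ h4⟩)
  · exact .inr (.inr (.inl ⟨h1, h2, h₀ _ _ h3, h₀ _ _ h4⟩))
  · exact .inr (.inr (.inr ⟨la, lb, h1, h2, h3, f, fun i => h₁ _ _ (hf i)⟩))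

theorem and_wf (hA : A.Wf) (hB : B.Wf) (h : LeStep R₀ R₁ A B) :
    LeStep (fun U V => U.Wf ∧ V.Wf ∧ R₀ U V) (fun U V => U.Wf ∧ V.Wf ∧ R₁ U V) A B := by
  rcases h with hatom | ⟨h1, h2, h3, h4⟩ | ⟨h1, h2, h3, h4⟩ | ⟨la, lb, h1, h2, h3, f, hf⟩
  · exact .inl hatom
  · exact .inr (.inl ⟨h1, h2, ⟨hA.child h1 trivial _, hB.child h2 trivial _, h3⟩,
      ⟨hA.child h1 trivial _, hB.child h2 trivial _, h4⟩⟩)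
  · exact .inr (.inr (.inl ⟨h1, h2, ⟨hB.child h2 trivial _, hA.child h1 trivial _, h3⟩,
      ⟨hA.child h1 trivial _, hB.child h2 trivial _, h4⟩⟩))
  · exact .inr (.inr (.inr ⟨la, lb, h1, h2, h3, f, fun i =>
      ⟨h1.wf hA _ (List.get_mem _ _), h2.wf hB _ (List.get_mem _ _), hf i⟩⟩))

theorem comp_iff (hA : A [] = some Lab.comp) (hB : B [] = some Lab.comp) :
    LeStep R₀ R₁ A B ↔ R₀ (A.child false) (B.child false) ∧ R₀ (A.child true) (B.child true) := by
  refine ⟨?_, fun h => .inr (.inl ⟨hA, hB, h⟩)⟩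
  rintro (⟨a, h1, -⟩ | ⟨-, -, h⟩ | ⟨h1, -⟩ | ⟨la, lb, h1, h2, h3, -⟩)
  · simp [hA] at h1
  · exact h
  · simp [hA] at h1
  · have := h1.length_eq_one (by simp [hA])
    have := h2.length_eq_one (by simp [hB])
    omega

theorem arr_iff (hA : A [] = some Lab.arr) (hB : B [] = some Lab.arr) :
    LeStep R₀ R₁ A B ↔ R₀ (B.child false) (A.child false) ∧ R₀ (A.child true) (B.child true) := by
  refine ⟨?_, fun h => .inr (.inr (.inl ⟨hA, hB, h⟩))⟩
  rintro (⟨a, h1, -⟩ | ⟨h1, -⟩ | ⟨-, -, h⟩ | ⟨la, lb, h1, h2, h3, -⟩)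
  · simp [hA] at h1
  · simp [hA] at h1
  · exact h
  · have := h1.length_eq_one (by simp [hA])
    have := h2.length_eq_one (by simp [hB])
    omega

theorem union_iff (hu : A [] = some Lab.union ∨ B [] = some Lab.union) :
    LeStep R₀ R₁ A B ↔ UnionCase R₁ A B := by
  refine ⟨?_, fun h => .inr (.inr (.inr h))⟩
  rintro (⟨a, h1, h2⟩ | ⟨h1, h2, -⟩ | ⟨h1, h2, -⟩ | h)
  iterate 3 rcases hu with hu | hu <;> simp_all
  exact h

theorem forall_of_antitone {R₀ R₁ : ℕ → ITree → ITree → Prop}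
    (hR₁ : ∀ U V, Antitone fun k => R₁ k U V) (h : ∀ k, LeStep (R₀ k) (R₁ k) A B) :
    LeStep (fun U V => ∀ k, R₀ k U V) (fun U V => ∀ k, R₁ k U V) A B := by
  rcases h 0 with hatom | ⟨h1, h2, -⟩ | ⟨h1, h2, -⟩ | ⟨la, lb, hla, hlb, hlen, -⟩
  · exact .inl hatom
  · simp only [comp_iff h1 h2] at h ⊢
    exact ⟨fun k => (h k).1, fun k => (h k).2⟩
  · simp only [arr_iff h1 h2] at h ⊢
    exact ⟨fun k => (h k).1, fun k => (h k).2⟩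
  · have hu : A [] = some Lab.union ∨ B [] = some Lab.union := by
      by_contra! hne
      have := hla.length_eq_one hne.1
      have := hlb.length_eq_one hne.2
      omega
    simp only [union_iff hu, unionCase_iff hla hlb] at h ⊢
    choose F hF using fun k => (h k).2
    -- pigeonhole: one matching `f` serves for infinitely many depths
    obtain ⟨f, hf⟩ := Finite.exists_infinite_fiber F
    refine ⟨hlen, f, fun i k => ?_⟩
    obtain ⟨k', hk', hkk'⟩ := (Set.infinite_coe_iff.mp hf).exists_gt k
    exact hR₁ _ _ hkk'.le (hk' ▸ hF k' i)

end LeStep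

theorem leStep_cut_succ_iff {R₀ R₁ : ITree → ITree → Prop} {A B : ITree} (hA : A.Wf)
    (hB : B.Wf) (k : ℕ) :
    LeStep R₀ R₁ (cut (k + 1) A) (cut (k + 1) B) ↔
      LeStep (fun U V => R₀ (cut k U) (cut k V))
        (fun U V => R₁ (cut (k + 1) U) (cut (k + 1) V)) A B := by
  unfold LeStep
  rw [cut_root k.succ_pos, cut_root k.succ_pos, unionCase_cut_iff hA hB k.succ_pos]
  refine or_congr Iff.rfl (or_congr ?_ (or_congr ?_ Iff.rfl)) <;>
  · refine and_congr_right fun h1 => and_congr_right fun h2 => ?_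
    simp only [child_cut_succ (A := A) (by simp [h1]), child_cut_succ (A := B) (by simp [h2])]

theorem TreeLe.unfold {A B : ITree} (h : TreeLe A B) : LeStep TreeLe TreeLe A B := by
  obtain ⟨R, hR, hAB⟩ := h
  exact (leF_iff_leStep.1 (hR _ _ hAB)).mono (fun _ _ h => ⟨R, hR, h⟩) (fun _ _ h => ⟨R, hR, h⟩)

theorem treeLe_cut_of_step (P : ℕ → ITree → ITree → Prop)
    (hP : ∀ k X Y, X.Wf → Y.Wf → P (k + 1) X Y →
      LeStep (fun U V => U.Wf ∧ V.Wf ∧ P k U V) (fun U V => U.Wf ∧ V.Wf ∧ P (k + 1) U V) X Y)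
    {k : ℕ} {X Y : ITree} (hX : X.Wf) (hY : Y.Wf) (h : P k X Y) :
    TreeLe (cut k X) (cut k Y) := by
  refine ⟨fun U V => ∃ k X Y, X.Wf ∧ Y.Wf ∧ P k X Y ∧ U = cut k X ∧ V = cut k Y, ?_,
    k, X, Y, hX, hY, h, rfl, rfl⟩
  rintro _ _ ⟨_ | k, X, Y, hX, hY, h, rfl, rfl⟩
  · exact .inl ⟨_, cut_zero_root hX.1, cut_zero_root hY.1⟩
  · refine leF_iff_leStep.2 <|
      (leStep_cut_succ_iff hX hY k).2 ((hP k X Y hX hY h).mono ?_ ?_) <;>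
    exact fun U V ⟨hU, hV, hUV⟩ => ⟨_, U, V, hU, hV, hUV, rfl, rfl⟩

theorem TreeLe.cut {A B : ITree} (hA : A.Wf) (hB : B.Wf) (h : TreeLe A B) (k : ℕ) :
    TreeLe (cut k A) (cut k B) :=
  treeLe_cut_of_step (fun _ => TreeLe) (fun _ _ _ hX hY h => h.unfold.and_wf hX hY) hA hB h

theorem treeLe_cut_of_le {A B : ITree} (hA : A.Wf) (hB : B.Wf) {k k' : ℕ} (hk : k ≤ k')
    (h : TreeLe (cut k' A) (cut k' B)) : TreeLe (cut k A) (cut k B) := by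
  refine treeLe_cut_of_step (fun k X Y => ∃ k', k ≤ k' ∧ TreeLe (cut k' X) (cut k' Y)) ?_
    hA hB ⟨k', hk, h⟩
  rintro k X Y hX hY ⟨_ | k', hk', h⟩
  · omega
  · exact (((leStep_cut_succ_iff hX hY k').1 h.unfold).and_wf hX hY).mono
      (fun U V ⟨hU, hV, h⟩ => ⟨hU, hV, k', by omega, h⟩)
      (fun U V ⟨hU, hV, h⟩ => ⟨hU, hV, k' + 1, hk', h⟩)

theorem treeLe_of_forall_cut {A B : ITree} (hA : A.Wf) (hB : B.Wf)
    (h : ∀ k, TreeLe (cut k A) (cut k B)) : TreeLe A B := by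
  refine ⟨fun U V => U.Wf ∧ V.Wf ∧ ∀ k, TreeLe (cut k U) (cut k V), ?_, hA, hB, h⟩
  rintro X Y ⟨hX, hY, hXY⟩
  have hstep : ∀ k, LeStep (fun U V => U.Wf ∧ V.Wf ∧ TreeLe (cut k U) (cut k V))
      (fun U V => U.Wf ∧ V.Wf ∧ TreeLe (cut (k + 1) U) (cut (k + 1) V)) X Y :=
    fun k => ((leStep_cut_succ_iff hX hY k).1 (hXY (k + 1)).unfold).and_wf hX hY
  refine leF_iff_leStep.2 <| (LeStep.forall_of_antitone ?_ hstep).mono ?_ ?_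
  · exact fun U V k k' hkk' ⟨hU, hV, h⟩ => ⟨hU, hV, treeLe_cut_of_le hU hV (by omega) h⟩
  · exact fun U V h => ⟨(h 0).1, (h 0).2.1, fun k => (h k).2.2⟩
  · exact fun U V h => ⟨(h 0).1, (h 0).2.1,
      fun k => treeLe_cut_of_le (h 0).1 (h 0).2.1 k.le_succ (h k).2.2⟩

/-- two infinite types are in the coinductive subtyping relation iff
all their finite truncations are. -/
theorem stmt11 (A B : ITree) (hA : A.Wf) (hB : B.Wf) :
    (∀ k : ℕ, TreeLe (cut k A) (cut k B)) ↔ TreeLe A B :=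
  ⟨treeLe_of_forall_cut hA hB, fun h k => h.cut hA hB k⟩

end CAP
end

section
/- Coinductive equivalence implies coinductive subtyping on infinite types: if A ≈_T B then A ≤_T B. -/
/-!
`≈_T` is itself a post-fixed point of the subtyping functional, hence contained in `≤_T`.
The union rule of `≈_T` already provides the forward matching that `≤_T` asks for, and the
contravariant domain premise of `⊃` comes from the symmetry of `≈_T`.
-/

namespace CAP

theorem EqF.mono {R S : ITree → ITree → Prop} (hRS : ∀ X Y, R X Y → S X Y) {A B : ITree}
    (h : EqF R A B) : EqF S A B := by
  rcases h with ⟨a, hA, hB⟩ | ⟨hA, hB, h₀, h₁⟩ | ⟨hA, hB, h₀, h₁⟩ |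
    ⟨la, lb, hla, hlb, hlen, ⟨f, hf⟩, ⟨g, hg⟩⟩
  · exact Or.inl ⟨a, hA, hB⟩
  · exact Or.inr <| Or.inl ⟨hA, hB, hRS _ _ h₀, hRS _ _ h₁⟩
  · exact Or.inr <| Or.inr <| Or.inl ⟨hA, hB, hRS _ _ h₀, hRS _ _ h₁⟩
  · exact Or.inr <| Or.inr <| Or.inr
      ⟨la, lb, hla, hlb, hlen, ⟨f, fun i => hRS _ _ (hf i)⟩, ⟨g, fun j => hRS _ _ (hg j)⟩⟩

theorem EqF.flip {R : ITree → ITree → Prop} {A B : ITree} (h : EqF R A B) :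
    EqF (flip R) B A := by
  rcases h with ⟨a, hA, hB⟩ | ⟨hA, hB, h₀, h₁⟩ | ⟨hA, hB, h₀, h₁⟩ |
    ⟨la, lb, hla, hlb, hlen, ⟨f, hf⟩, ⟨g, hg⟩⟩
  · exact Or.inl ⟨a, hB, hA⟩
  · exact Or.inr <| Or.inl ⟨hB, hA, h₀, h₁⟩
  · exact Or.inr <| Or.inr <| Or.inl ⟨hB, hA, h₀, h₁⟩
  · exact Or.inr <| Or.inr <| Or.inr ⟨lb, la, hlb, hla, by omega, ⟨g, hg⟩, ⟨f, hf⟩⟩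

theorem LeF.of_eqF {R : ITree → ITree → Prop} (hR : ∀ X Y, R X Y → R Y X) {A B : ITree}
    (h : EqF R A B) : LeF R A B := by
  rcases h with ⟨a, hA, hB⟩ | ⟨hA, hB, h₀, h₁⟩ | ⟨hA, hB, h₀, h₁⟩ |
    ⟨la, lb, hla, hlb, hlen, hf, -⟩
  · exact Or.inl ⟨a, hA, hB⟩
  · exact Or.inr <| Or.inl ⟨hA, hB, h₀, h₁⟩
  · exact Or.inr <| Or.inr <| Or.inl ⟨hA, hB, hR _ _ h₀, h₁⟩
  · exact Or.inr <| Or.inr <| Or.inr ⟨la, lb, hla, hlb, hlen, hf⟩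

theorem TreeEq.symm {A B : ITree} (h : TreeEq A B) : TreeEq B A := by
  obtain ⟨R, hR, hAB⟩ := h
  exact ⟨flip R, fun X Y hXY => (hR Y X hXY).flip, hAB⟩

theorem TreeEq.eqF {A B : ITree} (h : TreeEq A B) : EqF TreeEq A B := by
  obtain ⟨R, hR, hAB⟩ := h
  exact (hR A B hAB).mono fun X Y hXY => ⟨R, hR, hXY⟩

theorem stmt12_general (A B : ITree) (h : TreeEq A B) :
    TreeLe A B :=
  ⟨TreeEq, fun _ _ hXY => LeF.of_eqF (fun _ _ => TreeEq.symm) hXY.eqF, h⟩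

/-- coinductive equivalence implies coinductive subtyping. -/
theorem stmt12 (A B : ITree) (hA : A.Wf) (hB : B.Wf) (h : TreeEq A B) :
    TreeLe A B :=
  stmt12_general A B h

end CAP
end
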